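/- Let c > 1/2, C* > 0, and t* ≥ 1. There exists a time-independent constant K > 0 such that for all t ≥ t*, the quantity I₄(t) := t^{−4c} · ∫_{u=t*}^{t} ∫_{s=u}^{t} ∫_{w=s}^{t} ∫_{r=w}^{t} r^{c−2} · s^{2c−2} · w^{c−2} · e^{−C* r + 2C* u − C* s} dr dw ds du satisfies: I₄(t) ≤ K/t⁵ if c > 5/4; I₄(t) ≤ K(1 + log t)/t⁵ if c = 5/4; and I₄(t) ≤ K/t^{4c} if 1/2 < c < 5/4. -/

import Mathlib

/-!
Write the exponential as `exp (-C* (r - u) - C* (s - u))`. For `1 ≤ u ≤ x` one has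
`a log (x / u) ≤ λ (x - u) + O(1)` for every `λ > 0`, so each power `x ^ a` in the integrand
may be replaced by `u ^ a` at the price of a factor `exp (C* (x - u) / 4)`. The integrand is then
at most `A u^(4c-6) exp (-(3C*/4) (s - u) - (C*/2) (r - u))`, whose integrals in `r`, `w` and `s`
are bounded independently of `t`. What remains is `∫_{t*}^t u^(4c-6) du`, which is `O(t^(4c-5))`,
`O(log t)` or `O(1)` according as `4c - 6` is above, equal to, or below `-1`.
-/

open MeasureTheory Set Real

/-- The quantity `I₄(t)` from Lemma 5.5: a fourfold iterated integral over the
ordered region `t* ≤ u ≤ s ≤ w ≤ r ≤ t`, scaled by `t^{-4c}`. -/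
noncomputable def I4 (c Cstar tstar t : ℝ) : ℝ :=
  t ^ (-(4 * c)) *
    ∫ u in tstar..t, ∫ s in u..t, ∫ w in s..t, ∫ r in w..t,
      r ^ (c - 2) * s ^ (2 * c - 2) * w ^ (c - 2) *
        Real.exp (-Cstar * r + 2 * Cstar * u - Cstar * s)

-- Unlike `intervalIntegral.integral_mono_on`, `f` need not be integrable: otherwise `∫ f = 0`.
lemma integral_mono_on_of_nonneg {f g : ℝ → ℝ} {a b : ℝ} (hab : a ≤ b)
    (hg : IntervalIntegrable g volume a b) (hf : ∀ x ∈ Icc a b, 0 ≤ f x)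
    (hfg : ∀ x ∈ Icc a b, f x ≤ g x) :
    ∫ x in a..b, f x ≤ ∫ x in a..b, g x := by
  by_cases hfi : IntervalIntegrable f volume a b
  · exact intervalIntegral.integral_mono_on hab hfi hg hfg
  · rw [intervalIntegral.integral_undef hfi]
    exact intervalIntegral.integral_nonneg hab fun x hx => (hf x hx).trans (hfg x hx)

lemma integral_exp_mul_sub_le {k : ℝ} (hk : 0 < k) (u a b : ℝ) :
    ∫ x in a..b, exp (k * (u - x)) ≤ exp (k * (u - a)) / k := by
  have hlin : ∀ x, k * (u - x) = -k * x + k * u := fun x => by ring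
  simp only [hlin]
  rw [intervalIntegral.integral_comp_mul_add exp (neg_ne_zero.2 hk.ne'), integral_exp,
    smul_eq_mul, inv_neg, neg_mul, ← mul_neg, neg_sub, inv_mul_eq_div]
  gcongr
  exact sub_le_self _ (exp_pos _).le

lemma integral_le_mul_exp_mul_sub_div {f : ℝ → ℝ} {a b u k K : ℝ} (hab : a ≤ b)
    (hk : 0 < k) (hf : ∀ x ∈ Icc a b, 0 ≤ f x)
    (hfK : ∀ x ∈ Icc a b, f x ≤ K * exp (k * (u - x))) :
    ∫ x in a..b, f x ≤ K * (exp (k * (u - a)) / k) := by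
  have ha : a ∈ Icc a b := left_mem_Icc.2 hab
  have hK : 0 ≤ K := nonneg_of_mul_nonneg_left ((hf a ha).trans (hfK a ha)) (exp_pos _)
  calc ∫ x in a..b, f x ≤ ∫ x in a..b, K * exp (k * (u - x)) :=
        integral_mono_on_of_nonneg hab
          ((by fun_prop : Continuous fun x => K * exp (k * (u - x))).intervalIntegrable a b) hf hfK
    _ = K * ∫ x in a..b, exp (k * (u - x)) := intervalIntegral.integral_const_mul _ _
    _ ≤ K * (exp (k * (u - a)) / k) := by gcongr; exact integral_exp_mul_sub_le hk u a b

lemma exists_mul_log_le_add (a : ℝ) {l : ℝ} (hl : 0 < l) :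
    ∃ M, ∀ x, 1 ≤ x → a * log x ≤ l * (x - 1) + M := by
  rcases le_or_gt a 0 with ha | ha
  · exact ⟨0, fun x hx => by nlinarith [log_nonneg hx]⟩
  · refine ⟨l - a - a * log (l / a), fun x hx => ?_⟩
    have hlog := log_le_sub_one_of_pos (show 0 < l / a * x by positivity)
    rw [log_mul (by positivity) (by positivity)] at hlog
    have hscaled := mul_le_mul_of_nonneg_left hlog ha.le
    rw [mul_sub, ← mul_assoc, mul_div_cancel₀ _ ha.ne', mul_add] at hscaled
    linarith

lemma exists_rpow_le_mul_rpow_mul_exp (a : ℝ) {l : ℝ} (hl : 0 < l) :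
    ∃ C, 0 < C ∧ ∀ u x, 1 ≤ u → u ≤ x → x ^ a ≤ C * u ^ a * exp (l * (x - u)) := by
  obtain ⟨M, hM⟩ := exists_mul_log_le_add a hl
  refine ⟨exp M, exp_pos M, fun u x hu hux => ?_⟩
  have hu0 : 0 < u := by linarith
  have hx0 : 0 < x := by linarith
  have hratio : x / u - 1 ≤ x - u := by
    rw [div_sub_one hu0.ne', div_le_iff₀ hu0]; nlinarith
  have hlog := hM (x / u) ((one_le_div hu0).2 hux)
  rw [log_div hx0.ne' hu0.ne'] at hlog
  rw [rpow_def_of_pos hx0, rpow_def_of_pos hu0, ← exp_add, ← exp_add]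
  exact exp_le_exp.2 (by nlinarith [mul_le_mul_of_nonneg_left hratio hl.le])

noncomputable def i4Integrand (c Cstar u s w r : ℝ) : ℝ :=
  r ^ (c - 2) * s ^ (2 * c - 2) * w ^ (c - 2) * exp (-Cstar * r + 2 * Cstar * u - Cstar * s)

lemma i4Integrand_nonneg (c Cstar u : ℝ) {s w r : ℝ} (hs : 0 ≤ s) (hw : 0 ≤ w)
    (hr : 0 ≤ r) :
    0 ≤ i4Integrand c Cstar u s w r := by
  unfold i4Integrand; positivity

lemma exists_i4Integrand_le (c : ℝ) {Cstar : ℝ} (hC : 0 < Cstar) :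
    ∃ A, 0 < A ∧ ∀ u s w r, 1 ≤ u → u ≤ s → s ≤ w → w ≤ r →
      i4Integrand c Cstar u s w r ≤
        A * u ^ (4 * c - 6) * exp (3 * Cstar / 4 * (u - s)) * exp (Cstar / 2 * (u - r)) := by
  have hl : 0 < Cstar / 4 := by positivity
  obtain ⟨C₁, hC₁, hpow₁⟩ := exists_rpow_le_mul_rpow_mul_exp (c - 2) hl
  obtain ⟨C₂, hC₂, hpow₂⟩ := exists_rpow_le_mul_rpow_mul_exp (2 * c - 2) hl
  refine ⟨C₁ * C₂ * C₁, by positivity, fun u s w r hu hus hsw hwr => ?_⟩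
  have hu0 : 0 < u := by linarith
  have hs0 : 0 < s := by linarith
  have hw0 : 0 < w := by linarith
  have hr0 : 0 < r := by linarith
  have hr := hpow₁ u r hu (by linarith)
  have hs := hpow₂ u s hu hus
  have hw : w ^ (c - 2) ≤ C₁ * u ^ (c - 2) * exp (Cstar / 4 * (r - u)) :=
    (hpow₁ u w hu (by linarith)).trans (by gcongr)
  have hpow : u ^ (c - 2) * u ^ (2 * c - 2) * u ^ (c - 2) = u ^ (4 * c - 6) := by
    rw [← rpow_add hu0, ← rpow_add hu0]; ring_nf
  have hexp : exp (Cstar / 4 * (r - u)) * exp (Cstar / 4 * (s - u)) * exp (Cstar / 4 * (r - u)) *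
      exp (-Cstar * r + 2 * Cstar * u - Cstar * s) =
        exp (3 * Cstar / 4 * (u - s)) * exp (Cstar / 2 * (u - r)) := by
    simp only [← exp_add]; ring_nf
  calc i4Integrand c Cstar u s w r
      ≤ (C₁ * u ^ (c - 2) * exp (Cstar / 4 * (r - u))) *
          (C₂ * u ^ (2 * c - 2) * exp (Cstar / 4 * (s - u))) *
          (C₁ * u ^ (c - 2) * exp (Cstar / 4 * (r - u))) *
          exp (-Cstar * r + 2 * Cstar * u - Cstar * s) := by
        unfold i4Integrand; gcongr
    _ = C₁ * C₂ * C₁ * (u ^ (c - 2) * u ^ (2 * c - 2) * u ^ (c - 2)) *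
          (exp (Cstar / 4 * (r - u)) * exp (Cstar / 4 * (s - u)) * exp (Cstar / 4 * (r - u)) *
            exp (-Cstar * r + 2 * Cstar * u - Cstar * s)) := by ring
    _ = _ := by rw [hpow, hexp]; ring

lemma integral_integral_i4Integrand_nonneg (c Cstar u : ℝ) {s t : ℝ} (hs : 0 ≤ s)
    (hst : s ≤ t) :
    0 ≤ ∫ w in s..t, ∫ r in w..t, i4Integrand c Cstar u s w r :=
  intervalIntegral.integral_nonneg hst fun w hw => intervalIntegral.integral_nonneg hw.2
    fun r hr => i4Integrand_nonneg c Cstar u hs (by linarith [hw.1]) (by linarith [hw.1, hr.1])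

lemma integral_i4Integrand_le {c Cstar A u t : ℝ} (hC : 0 < Cstar)
    (hA : ∀ s w r, u ≤ s → s ≤ w → w ≤ r → i4Integrand c Cstar u s w r ≤
      A * u ^ (4 * c - 6) * exp (3 * Cstar / 4 * (u - s)) * exp (Cstar / 2 * (u - r)))
    (hu : 0 ≤ u) (hut : u ≤ t) :
    ∫ s in u..t, ∫ w in s..t, ∫ r in w..t, i4Integrand c Cstar u s w r ≤
      A / (Cstar / 2) ^ 2 / (5 * Cstar / 4) * u ^ (4 * c - 6) := by
  have hr : ∀ s w, u ≤ s → s ≤ w → w ≤ t →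
      ∫ r in w..t, i4Integrand c Cstar u s w r ≤
      A * u ^ (4 * c - 6) * exp (3 * Cstar / 4 * (u - s)) *
        (exp (Cstar / 2 * (u - w)) / (Cstar / 2)) :=
    fun s w hus hsw hwt => integral_le_mul_exp_mul_sub_div hwt (by positivity)
      (fun r hr => i4Integrand_nonneg c Cstar u (by linarith) (by linarith) (by linarith [hr.1]))
      (fun r hr => hA s w r hus hsw hr.1)
  have hw : ∀ s, u ≤ s → s ≤ t →
      ∫ w in s..t, ∫ r in w..t, i4Integrand c Cstar u s w r ≤
      A * u ^ (4 * c - 6) * exp (3 * Cstar / 4 * (u - s)) / (Cstar / 2) *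
        (exp (Cstar / 2 * (u - s)) / (Cstar / 2)) :=
    fun s hus hst => integral_le_mul_exp_mul_sub_div hst (by positivity)
      (fun w hw => intervalIntegral.integral_nonneg hw.2 fun r hr =>
        i4Integrand_nonneg c Cstar u (by linarith) (by linarith [hw.1]) (by linarith [hw.1, hr.1]))
      (fun w hw => (hr s w hus hw.1 hw.2).trans_eq (by ring))
  calc ∫ s in u..t, ∫ w in s..t, ∫ r in w..t, i4Integrand c Cstar u s w r
      ≤ A * u ^ (4 * c - 6) / (Cstar / 2) ^ 2 *
          (exp (5 * Cstar / 4 * (u - u)) / (5 * Cstar / 4)) :=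
        integral_le_mul_exp_mul_sub_div hut (by positivity)
          (fun s hs => integral_integral_i4Integrand_nonneg c Cstar u (by linarith [hs.1]) hs.2)
          (fun s hs => (hw s hs.1 hs.2).trans_eq (by
            rw [show 5 * Cstar / 4 * (u - s) = 3 * Cstar / 4 * (u - s) + Cstar / 2 * (u - s) by
              ring, exp_add]
            ring))
    _ = A / (Cstar / 2) ^ 2 / (5 * Cstar / 4) * u ^ (4 * c - 6) := by
        rw [sub_self, mul_zero, exp_zero]; ring

lemma exists_I4_le (c : ℝ) {Cstar tstar : ℝ} (hC : 0 < Cstar) (htstar : 1 ≤ tstar) :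
    ∃ B, 0 < B ∧ ∀ t, tstar ≤ t →
      I4 c Cstar tstar t ≤ B * (t ^ (-(4 * c)) * ∫ u in tstar..t, u ^ (4 * c - 6)) := by
  obtain ⟨A, hA0, hA⟩ := exists_i4Integrand_le c hC
  refine ⟨A / (Cstar / 2) ^ 2 / (5 * Cstar / 4), by positivity, fun t ht => ?_⟩
  have hpos : (0 : ℝ) ∉ uIcc tstar t := by
    rw [uIcc_of_le ht]; exact fun h => by linarith [h.1]
  have hquad : ∫ u in tstar..t, ∫ s in u..t, ∫ w in s..t, ∫ r in w..t,
      i4Integrand c Cstar u s w r ≤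
      ∫ u in tstar..t, A / (Cstar / 2) ^ 2 / (5 * Cstar / 4) * u ^ (4 * c - 6) :=
    integral_mono_on_of_nonneg ht
      ((intervalIntegral.intervalIntegrable_rpow (Or.inr hpos)).const_mul _)
      (fun u hu => intervalIntegral.integral_nonneg hu.2 fun s hs =>
        integral_integral_i4Integrand_nonneg c Cstar u (by linarith [hu.1, hs.1]) hs.2)
      (fun u hu => integral_i4Integrand_le hC (hA u · · · (by linarith [hu.1]))
        (by linarith [hu.1]) hu.2)
  rw [intervalIntegral.integral_const_mul] at hquad
  calc I4 c Cstar tstar t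
      = t ^ (-(4 * c)) *
          ∫ u in tstar..t, ∫ s in u..t, ∫ w in s..t, ∫ r in w..t,
            i4Integrand c Cstar u s w r := rfl
    _ ≤ t ^ (-(4 * c)) * (A / (Cstar / 2) ^ 2 / (5 * Cstar / 4) *
          ∫ u in tstar..t, u ^ (4 * c - 6)) := by
        gcongr; exact rpow_nonneg (by linarith) _
    _ = _ := by ring

lemma integral_rpow_le_of_neg_one_lt {p a : ℝ} (hp : -1 < p) (ha : 0 ≤ a) (b : ℝ) :
    ∫ x in a..b, x ^ p ≤ b ^ (p + 1) / (p + 1) := by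
  rw [integral_rpow (Or.inl hp)]
  have : 0 < p + 1 := by linarith
  gcongr
  exact sub_le_self _ (rpow_nonneg ha _)

lemma integral_rpow_le_of_lt_neg_one {p a b : ℝ} (hp : p < -1) (ha : 0 < a) (hab : a ≤ b) :
    ∫ x in a..b, x ^ p ≤ a ^ (p + 1) / -(p + 1) := by
  have hpos : (0 : ℝ) ∉ uIcc a b := by
    rw [uIcc_of_le hab]; exact fun h => by linarith [h.1]
  rw [integral_rpow (Or.inr ⟨hp.ne, hpos⟩), ← neg_div_neg_eq, neg_sub]
  have : 0 < -(p + 1) := by linarith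
  gcongr
  exact sub_le_self _ (rpow_nonneg (by linarith) _)

lemma rpow_neg_mul_integral_rpow_le_of_gt {c a t : ℝ}
    (hc : 5 / 4 < c) (ha : 0 < a) (hat : a ≤ t) :
    t ^ (-(4 * c)) * ∫ x in a..t, x ^ (4 * c - 6) ≤ (4 * c - 5)⁻¹ / t ^ 5 := by
  have ht : 0 < t := by linarith
  calc t ^ (-(4 * c)) * ∫ x in a..t, x ^ (4 * c - 6)
      ≤ t ^ (-(4 * c)) * (t ^ (4 * c - 6 + 1) / (4 * c - 6 + 1)) := by
        gcongr; exact integral_rpow_le_of_neg_one_lt (by linarith) ha.le t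
    _ = (4 * c - 5)⁻¹ * t ^ (-(4 * c) + (4 * c - 6 + 1)) := by
        rw [rpow_add ht (-(4 * c))]; ring
    _ = (4 * c - 5)⁻¹ / t ^ 5 := by
        rw [show -(4 * c) + (4 * c - 6 + 1) = -((5 : ℕ) : ℝ) by push_cast; ring, rpow_neg ht.le,
          rpow_natCast, div_eq_mul_inv]

lemma rpow_neg_mul_integral_rpow_le_of_eq {c a t : ℝ}
    (hc : c = 5 / 4) (ha : 1 ≤ a) (hat : a ≤ t) :
    t ^ (-(4 * c)) * ∫ x in a..t, x ^ (4 * c - 6) ≤ (1 + log t) / t ^ 5 := by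
  have ht : 0 < t := by linarith
  rw [hc, show 4 * (5 / 4 : ℝ) - 6 = -1 by norm_num,
    show -(4 * (5 / 4 : ℝ)) = -((5 : ℕ) : ℝ) by norm_num, rpow_neg ht.le, rpow_natCast]
  simp only [rpow_neg_one]
  rw [integral_inv_of_pos (by linarith) ht, log_div ht.ne' (by linarith), inv_mul_eq_div]
  gcongr
  linarith [log_nonneg ha]

lemma rpow_neg_mul_integral_rpow_le_of_lt {c a t : ℝ}
    (hc : c < 5 / 4) (ha : 0 < a) (hat : a ≤ t) :
    t ^ (-(4 * c)) * ∫ x in a..t, x ^ (4 * c - 6) ≤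
      a ^ (4 * c - 5) / (5 - 4 * c) / t ^ (4 * c) := by
  have ht : 0 < t := by linarith
  calc t ^ (-(4 * c)) * ∫ x in a..t, x ^ (4 * c - 6)
      ≤ t ^ (-(4 * c)) * (a ^ (4 * c - 6 + 1) / -(4 * c - 6 + 1)) := by
        gcongr; exact integral_rpow_le_of_lt_neg_one (by linarith) ha hat
    _ = a ^ (4 * c - 5) / (5 - 4 * c) / t ^ (4 * c) := by
        rw [show 4 * c - 6 + 1 = 4 * c - 5 by ring, rpow_neg ht.le]; ring

theorem stmt_3_general (c Cstar tstar : ℝ) (hC : 0 < Cstar)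
    (htstar : 1 ≤ tstar) :
    ∃ K : ℝ, 0 < K ∧ ∀ t : ℝ, tstar ≤ t →
      (5 / 4 < c → I4 c Cstar tstar t ≤ K / t ^ 5) ∧
      (c = 5 / 4 → I4 c Cstar tstar t ≤ K * (1 + Real.log t) / t ^ 5) ∧
      (c < 5 / 4 → I4 c Cstar tstar t ≤ K / t ^ (4 * c)) := by
  obtain ⟨B, hB, hI4⟩ := exists_I4_le c hC htstar
  have hts : 0 < tstar := by linarith
  rcases lt_trichotomy c (5 / 4) with hlt | heq | hgt
  · refine ⟨B * (tstar ^ (4 * c - 5) / (5 - 4 * c)),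
      mul_pos hB (div_pos (rpow_pos_of_pos hts _) (by linarith)),
      fun t ht => ⟨fun h => by linarith, fun h => by linarith, fun _ => ?_⟩⟩
    rw [mul_div_assoc]
    exact (hI4 t ht).trans (by gcongr; exact rpow_neg_mul_integral_rpow_le_of_lt hlt hts ht)
  · refine ⟨B, hB, fun t ht => ⟨fun h => by linarith, fun _ => ?_, fun h => by linarith⟩⟩
    rw [mul_div_assoc]
    exact (hI4 t ht).trans (by gcongr; exact rpow_neg_mul_integral_rpow_le_of_eq heq htstar ht)
  · refine ⟨B * (4 * c - 5)⁻¹, mul_pos hB (inv_pos.2 (by linarith)),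
      fun t ht => ⟨fun _ => ?_, fun h => by linarith, fun h => by linarith⟩⟩
    rw [mul_div_assoc]
    exact (hI4 t ht).trans (by gcongr; exact rpow_neg_mul_integral_rpow_le_of_gt hgt hts ht)

/-- Lemma 5.5 of the paper. -/
theorem stmt_3 (c Cstar tstar : ℝ) (hc : 1 / 2 < c) (hC : 0 < Cstar)
    (htstar : 1 ≤ tstar) :
    ∃ K : ℝ, 0 < K ∧ ∀ t : ℝ, tstar ≤ t →
      (5 / 4 < c → I4 c Cstar tstar t ≤ K / t ^ 5) ∧
      (c = 5 / 4 → I4 c Cstar tstar t ≤ K * (1 + Real.log t) / t ^ 5) ∧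
      (c < 5 / 4 → I4 c Cstar tstar t ≤ K / t ^ (4 * c)) :=
  stmt_3_general c Cstar tstar hC htstar
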